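/- arXiv:2210.07325 — 3 statements merged into one kernel-verified Lean document; each statement's English description precedes it below -/
import Mathlib

section
/- Let H be a complex Hilbert space, X a unitary operator on H, and μ a finite Borel measure on the unit circle 𝕋. Then X preserves μ on the right (i.e., [UX]_μ is unitarily equivalent to [U]_μ for every unitary U on H) if and only if X preserves μ on the left (i.e., [XU]_μ is unitarily equivalent to [U]_μ for every unitary U on H). -/
open MeasureTheory InnerProductSpace

noncomputable section

instance : MeasurableSpace Circle := borel Circle
instance : BorelSpace Circle := ⟨rfl⟩

/-- arc-length (Haar/Lebesgue) measure on the circle -/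
def ell : Measure Circle := Measure.map Circle.exp (volume.restrict (Set.Ioc 0 (2 * Real.pi)))

variable {K : Type*} [NormedAddCommGroup K] [InnerProductSpace ℂ K]

/-- `ν` is the spectral measure of the pair `(U, ψ)`. -/
def IsSpectralMeasure (U : K ≃ₗᵢ[ℂ] K) (ψ : K) (ν : Measure Circle) : Prop :=
  IsFiniteMeasure ν ∧ ∀ n : ℤ, (inner ℂ ψ ((U ^ n) ψ) : ℂ) = ∫ z, (z : ℂ) ^ n ∂ν

open Classical in
/-- the spectral measure of the pair `(U, ψ)` -/
def specMeasure (U : K ≃ₗᵢ[ℂ] K) (ψ : K) : Measure Circle :=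
  if h : ∃ ν, IsSpectralMeasure U ψ ν then h.choose else 0

/-- the set `H_μ(U)` -/
def specSet (μ : Measure Circle) (U : K ≃ₗᵢ[ℂ] K) : Set K :=
  {ψ | specMeasure U ψ ≪ μ}

open Classical in
/-- the subspace `H_μ(U)` -/
def specSub (μ : Measure Circle) (U : K ≃ₗᵢ[ℂ] K) : Submodule ℂ K :=
  if h : ∃ S : Submodule ℂ K, (S : Set K) = specSet μ U then h.choose else ⊥

open Classical in
/-- the restriction `[U]_μ` of `U` to `H_μ(U)` -/
def restr (μ : Measure Circle) (U : K ≃ₗᵢ[ℂ] K) :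
    (specSub μ U) ≃ₗᵢ[ℂ] (specSub μ U) :=
  if h : ∃ V : (specSub μ U) ≃ₗᵢ[ℂ] (specSub μ U), ∀ ψ : specSub μ U, (V ψ : K) = U ψ
  then h.choose else LinearIsometryEquiv.refl ℂ _

/-- unitary equivalence of unitary operators on (possibly different) Hilbert spaces -/
def UnitarilyEquiv {K₁ K₂ : Type*} [NormedAddCommGroup K₁] [InnerProductSpace ℂ K₁]
    [NormedAddCommGroup K₂] [InnerProductSpace ℂ K₂]
    (A : K₁ ≃ₗᵢ[ℂ] K₁) (B : K₂ ≃ₗᵢ[ℂ] K₂) : Prop :=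
  ∃ V : K₁ ≃ₗᵢ[ℂ] K₂, ∀ x, V (A x) = B (V x)

/-- `X` preserves `μ` : for every unitary `U`, `[UX]_μ ≅ [U]_μ`. -/
def Preserves (μ : Measure Circle) (X : K ≃ₗᵢ[ℂ] K) : Prop :=
  ∀ U : K ≃ₗᵢ[ℂ] K, UnitarilyEquiv (restr μ (X.trans U)) (restr μ U)


/-- `X` preserves `μ` on the left : for every unitary `U`, `[XU]_μ ≅ [U]_μ`. -/
def PreservesLeft (μ : Measure Circle) (X : K ≃ₗᵢ[ℂ] K) : Prop :=
  ∀ U : K ≃ₗᵢ[ℂ] K, UnitarilyEquiv (restr μ (U.trans X)) (restr μ U)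

/-!
The unitary `X` intertwines `UX` and `XU`, since `X (UX) = (XU) X`. Spectral measures, hence the
subspaces `H_μ(·)` and the restrictions `[·]_μ`, are transported by any intertwining unitary, so
`[UX]_μ ≅ [XU]_μ` for every `U`; both conditions therefore say the same thing.
-/

section Semiconj

variable {K₁ K₂ : Type*} [NormedAddCommGroup K₁] [InnerProductSpace ℂ K₁]
  [NormedAddCommGroup K₂] [InnerProductSpace ℂ K₂]
  {V : K₁ ≃ₗᵢ[ℂ] K₂} {A : K₁ ≃ₗᵢ[ℂ] K₁} {B : K₂ ≃ₗᵢ[ℂ] K₂}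

open Function

lemma Function.Semiconj.symm_linearIsometryEquiv (h : Semiconj V A B) : Semiconj V.symm B A :=
  h.inverse_left V.symm_apply_apply V.apply_symm_apply

lemma Function.Semiconj.zpow_linearIsometryEquiv (h : Semiconj V A B) (n : ℤ) :
    Semiconj V ⇑(A ^ n) ⇑(B ^ n) := by
  have h_inv : Semiconj V ⇑A⁻¹ ⇑B⁻¹ := h.inverses_right A.apply_symm_apply B.symm_apply_apply
  induction n using Int.induction_on with
  | zero => exact Semiconj.id_right
  | succ n ih => simpa only [zpow_add_one, LinearIsometryEquiv.coe_mul] using ih.comp_right h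
  | pred n ih => simpa only [zpow_sub_one, LinearIsometryEquiv.coe_mul] using ih.comp_right h_inv

lemma isSpectralMeasure_apply_iff_of_semiconj (h : Semiconj V A B) (ψ : K₁) (ν : Measure Circle) :
    IsSpectralMeasure B (V ψ) ν ↔ IsSpectralMeasure A ψ ν := by
  refine and_congr_right' (forall_congr' fun n => ?_)
  rw [← (h.zpow_linearIsometryEquiv n).eq, V.inner_map_map]

lemma specMeasure_apply_of_semiconj (h : Semiconj V A B) (ψ : K₁) :
    specMeasure B (V ψ) = specMeasure A ψ := by
  have hν : IsSpectralMeasure B (V ψ) = IsSpectralMeasure A ψ :=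
    funext fun ν => propext (isSpectralMeasure_apply_iff_of_semiconj h ψ ν)
  unfold specMeasure
  rw [hν]

lemma specSet_of_semiconj (h : Semiconj V A B) (μ : Measure Circle) :
    specSet μ B = V '' specSet μ A := by
  rw [V.image_eq_preimage_symm]
  ext χ
  simp only [specSet, Set.mem_ofPred_eq, Set.mem_preimage,
    ← specMeasure_apply_of_semiconj h (V.symm χ), V.apply_symm_apply]

lemma exists_submodule_specSet_of_semiconj (h : Semiconj V A B) (μ : Measure Circle)
    (hA : ∃ S : Submodule ℂ K₁, (S : Set K₁) = specSet μ A) :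
    ∃ T : Submodule ℂ K₂, (T : Set K₂) = specSet μ B := by
  obtain ⟨S, hS⟩ := hA
  exact ⟨S.map (V : K₁ →ₗ[ℂ] K₂), by rw [Submodule.map_coe, hS, specSet_of_semiconj h]; rfl⟩

lemma specSub_of_semiconj (h : Semiconj V A B) (μ : Measure Circle) :
    specSub μ B = (specSub μ A).map (V : K₁ →ₗ[ℂ] K₂) := by
  by_cases hA : ∃ S : Submodule ℂ K₁, (S : Set K₁) = specSet μ A
  · have hB := exists_submodule_specSet_of_semiconj h μ hA
    apply SetLike.ext'
    rw [specSub, dif_pos hB, hB.choose_spec, specSet_of_semiconj h, Submodule.map_coe, specSub,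
      dif_pos hA, hA.choose_spec]
    rfl
  · have hB := mt (exists_submodule_specSet_of_semiconj h.symm_linearIsometryEquiv μ) hA
    rw [specSub, dif_neg hB, specSub, dif_neg hA, Submodule.map_bot]

def specSubMap (h : Semiconj V A B) (μ : Measure Circle) : specSub μ A ≃ₗᵢ[ℂ] specSub μ B :=
  (LinearIsometryEquiv.submoduleMap (specSub μ A) V).trans
    (LinearIsometryEquiv.ofEq _ _ (specSub_of_semiconj h μ).symm)

@[simp]
lemma coe_specSubMap_apply (h : Semiconj V A B) (μ : Measure Circle) (ψ : specSub μ A) :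
    (specSubMap h μ ψ : K₂) = V ψ :=
  rfl

end Semiconj

lemma restr_apply (μ : Measure Circle) (U : K ≃ₗᵢ[ℂ] K) (ψ : specSub μ U) :
    (restr μ U ψ : K) = U ψ := by
  -- `U` intertwines `U` with itself, so it maps `H_μ(U)` onto itself.
  have hU : ∃ V : specSub μ U ≃ₗᵢ[ℂ] specSub μ U, ∀ ψ : specSub μ U, (V ψ : K) = U ψ :=
    ⟨specSubMap (Function.Commute.refl ⇑U) μ, fun _ => rfl⟩
  rw [restr, dif_pos hU]
  exact hU.choose_spec ψ

namespace UnitarilyEquiv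

variable {K₁ K₂ K₃ : Type*} [NormedAddCommGroup K₁] [InnerProductSpace ℂ K₁]
  [NormedAddCommGroup K₂] [InnerProductSpace ℂ K₂] [NormedAddCommGroup K₃] [InnerProductSpace ℂ K₃]
  {A : K₁ ≃ₗᵢ[ℂ] K₁} {B : K₂ ≃ₗᵢ[ℂ] K₂} {C : K₃ ≃ₗᵢ[ℂ] K₃}

lemma symm (h : UnitarilyEquiv A B) : UnitarilyEquiv B A :=
  let ⟨V, hV⟩ := h
  ⟨V.symm, Function.Semiconj.symm_linearIsometryEquiv hV⟩

lemma trans (hAB : UnitarilyEquiv A B) (hBC : UnitarilyEquiv B C) : UnitarilyEquiv A C :=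
  let ⟨V, hV⟩ := hAB
  let ⟨W, hW⟩ := hBC
  ⟨V.trans W, Function.Semiconj.trans hV hW⟩

lemma restr (h : UnitarilyEquiv A B) (μ : Measure Circle) :
    UnitarilyEquiv (_root_.restr μ A) (_root_.restr μ B) := by
  obtain ⟨V, hV : Function.Semiconj V A B⟩ := h
  refine ⟨specSubMap hV μ, fun ψ => Subtype.ext ?_⟩
  rw [restr_apply, coe_specSubMap_apply, coe_specSubMap_apply, restr_apply]
  exact hV ψ

end UnitarilyEquiv

theorem preserves_right_iff_preserves_left_general {H : Type*} [NormedAddCommGroup H]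
    [InnerProductSpace ℂ H]
    (μ : Measure Circle) (X : H ≃ₗᵢ[ℂ] H) :
    Preserves μ X ↔ PreservesLeft μ X := by
  have hXU_UX (U : H ≃ₗᵢ[ℂ] H) : UnitarilyEquiv (restr μ (X.trans U)) (restr μ (U.trans X)) :=
    UnitarilyEquiv.restr (A := X.trans U) ⟨X, fun _ => rfl⟩ μ
  exact forall_congr' fun U => ⟨(hXU_UX U).symm.trans, (hXU_UX U).trans⟩

/-- A unitary `X` preserves `μ` on the right if and only if it preserves `μ` on the left. -/
theorem preserves_right_iff_preserves_left {H : Type*} [NormedAddCommGroup H]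
    [InnerProductSpace ℂ H] [CompleteSpace H]
    (μ : Measure Circle) [IsFiniteMeasure μ] (X : H ≃ₗᵢ[ℂ] H) :
    Preserves μ X ↔ PreservesLeft μ X :=
  preserves_right_iff_preserves_left_general μ X

end
end

section
/- Let U be a unitary operator on a complex Hilbert space H and let φ be a unit vector that is cyclic for U. Then for every λ ∈ ℝ, φ is cyclic for the perturbed unitary operator U_λ := U(𝟙 + (e^{iλ} − 1)P_φ), where P_φ is the orthogonal projection onto the span of φ. -/
open MeasureTheory InnerProductSpace

noncomputable section

variable {K : Type*} [NormedAddCommGroup K] [InnerProductSpace ℂ K]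

/-- `φ` is a cyclic vector for `U`: the closed linear span of `{U^j φ : j ∈ ℤ}` is all of
the space. -/
def CyclicVector (U : K ≃ₗᵢ[ℂ] K) (φ : K) : Prop :=
  (Submodule.span ℂ (Set.range fun j : ℤ => (U ^ j) φ)).topologicalClosure = ⊤

open Classical in
/-- The unitary operator `e^{iλP_φ} = 𝟙 + (e^{iλ} - 1)P_φ`, where `P_φ` is the orthogonal
projection onto the span of the unit vector `φ`. -/
def expProj (φ : K) (lam : ℝ) : K ≃ₗᵢ[ℂ] K :=
  if h : ∃ V : K ≃ₗᵢ[ℂ] K,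
      ∀ ξ, V ξ = ξ + ((Complex.exp (lam * Complex.I) - 1) * (inner ℂ φ ξ : ℂ)) • φ
  then h.choose else LinearIsometryEquiv.refl ℂ K

/-- The rank-one multiplicative perturbation `U_λ = U e^{iλP_φ} = U(𝟙 + (e^{iλ}-1)P_φ)`. -/
def Ulam (U : K ≃ₗᵢ[ℂ] K) (φ : K) (lam : ℝ) : K ≃ₗᵢ[ℂ] K :=
  (expProj φ lam).trans U

/-!
The closed span `M` of the `U_λ`-orbit of `φ` is invariant under `U_λ` and `U_λ⁻¹`. It contains
`φ`, and `e^{±iλP_φ}` move every vector only along `φ`, so `M` is also invariant under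
`e^{±iλP_φ}`, hence under `U = U_λ e^{-iλP_φ}` and `U⁻¹ = e^{iλP_φ} U_λ⁻¹`. Thus `M` contains
the `U`-orbit of `φ`, whose closed span is the whole space.
-/

open Set Submodule

namespace LinearIsometryEquiv

variable {R E : Type*} [Ring R] [SeminormedAddCommGroup E] [Module R E]

theorem mapsTo_zpow {U : E ≃ₗᵢ[R] E} {M : Set E} (h : MapsTo U M M) (h' : MapsTo U.symm M M)
    (j : ℤ) : MapsTo ⇑(U ^ j) M M := by
  induction j using Int.induction_on with
  | zero => exact mapsTo_id M
  | succ n ih => rw [zpow_add_one, coe_mul]; exact ih.comp h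
  | pred n ih => rw [zpow_sub_one, coe_mul, coe_inv]; exact ih.comp h'

theorem mapsTo_zpow_range_zpow (U : E ≃ₗᵢ[R] E) (x : E) (k : ℤ) :
    MapsTo ⇑(U ^ k) (range fun j : ℤ => (U ^ j) x) (range fun j : ℤ => (U ^ j) x) := by
  rintro _ ⟨j, rfl⟩
  exact ⟨k + j, by simp only [zpow_add, coe_mul, Function.comp_apply]⟩

theorem mapsTo_topologicalClosure_span [ContinuousConstSMul R E] (T : E ≃ₗᵢ[R] E) {s : Set E}
    (hs : MapsTo T s s) :
    MapsTo T (span R s).topologicalClosure (span R s).topologicalClosure := by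
  set M := (span R s).topologicalClosure
  have hspan : span R s ≤ M.comap T.toLinearMap :=
    span_le.mpr fun x hx => le_topologicalClosure _ (subset_span (hs hx))
  have hclosed : IsClosed (M.comap T.toLinearMap : Set E) :=
    (isClosed_topologicalClosure _).preimage T.continuous
  exact fun x hx => topologicalClosure_minimal _ hspan hclosed hx

theorem mapsTo_of_sub_mem {T : E ≃ₗᵢ[R] E} {M : Submodule R E} (hT : ∀ x, T x - x ∈ M) :
    MapsTo T M M := fun x hx => by
  simpa using add_mem hx (hT x)

theorem mapsTo_symm_of_sub_mem {T : E ≃ₗᵢ[R] E} {M : Submodule R E} (hT : ∀ x, T x - x ∈ M) :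
    MapsTo T.symm M M := fun x hx => by
  simpa using sub_mem hx (hT (T.symm x))

end LinearIsometryEquiv

open LinearIsometryEquiv

theorem CyclicVector.trans_of_sub_mem_span {U E : K ≃ₗᵢ[ℂ] K} {φ : K}
    (hE : ∀ ξ, E ξ - ξ ∈ ℂ ∙ φ) (hU : CyclicVector U φ) : CyclicVector (E.trans U) φ := by
  set V := E.trans U
  set M := (span ℂ (range fun j : ℤ => (V ^ j) φ)).topologicalClosure
  have hφ : φ ∈ M := le_topologicalClosure _ (subset_span ⟨0, by simp⟩)
  have hEM : ∀ ξ, E ξ - ξ ∈ M := fun ξ => (span_singleton_le_iff_mem φ M).mpr hφ (hE ξ)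
  have hV : MapsTo V M M := by
    have := mapsTo_zpow_range_zpow V φ 1
    rw [zpow_one] at this
    exact mapsTo_topologicalClosure_span V this
  have hV' : MapsTo V.symm M M := by
    have := mapsTo_zpow_range_zpow V φ (-1)
    rw [zpow_neg_one, coe_inv] at this
    exact mapsTo_topologicalClosure_span V.symm this
  have hUM : MapsTo U M M := by
    simpa [V, Function.comp_def] using hV.comp (mapsTo_symm_of_sub_mem hEM)
  have hUM' : MapsTo U.symm M M := by
    simpa [V, Function.comp_def] using (mapsTo_of_sub_mem hEM).comp hV'
  rw [CyclicVector, eq_top_iff, ← hU]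
  exact topologicalClosure_minimal _
    (span_le.mpr (range_subset_iff.mpr fun j => mapsTo_zpow hUM hUM' j hφ))
    (isClosed_topologicalClosure _)

theorem expProj_sub_mem_span (φ : K) (lam : ℝ) (ξ : K) : expProj φ lam ξ - ξ ∈ ℂ ∙ φ := by
  unfold expProj
  split_ifs with h
  · rw [h.choose_spec, add_sub_cancel_left]
    exact smul_mem _ _ (mem_span_singleton_self φ)
  · simp

theorem cyclic_Ulam_general {H : Type*} [NormedAddCommGroup H]
    [InnerProductSpace ℂ H]
    (U : H ≃ₗᵢ[ℂ] H) (φ : H) (hcyc : CyclicVector U φ) (lam : ℝ) :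
    CyclicVector (Ulam U φ lam) φ :=
  hcyc.trans_of_sub_mem_span (expProj_sub_mem_span φ lam)

/-- If the unit vector `φ` is cyclic for `U`, then it is cyclic for every perturbed
operator `U_λ = U(𝟙 + (e^{iλ}-1)P_φ)`. -/
theorem cyclic_Ulam {H : Type*} [NormedAddCommGroup H]
    [InnerProductSpace ℂ H] [CompleteSpace H]
    (U : H ≃ₗᵢ[ℂ] H) (φ : H) (hφ : ‖φ‖ = 1) (hcyc : CyclicVector U φ) (lam : ℝ) :
    CyclicVector (Ulam U φ lam) φ :=
  cyclic_Ulam_general U φ hcyc lam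

end
end

section
/- Let X be a unitary operator on a complex Hilbert space H such that X ≠ c𝟙 for every c ∈ 𝕋. Then there exists a unit vector φ ∈ H such that φ and X*φ are linearly independent and, setting R := 𝟙 − 2P_φ and Z := X*R*XR, the operator W := Z − 𝟙, which acts by Wξ = [4⟨φ,ξ⟩⟨φ,Xφ⟩ − 2⟨φ,Xξ⟩] X*φ − 2⟨φ,ξ⟩φ, has rank exactly 2. -/
open MeasureTheory InnerProductSpace

noncomputable section

variable {K : Type*} [NormedAddCommGroup K] [InnerProductSpace ℂ K]

/-- The reflection `R = 𝟙 - 2P_φ` (as a plain map): `ξ ↦ ξ - 2⟨φ,ξ⟩φ`. -/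
def reflVec (φ ξ : K) : K := ξ - (2 * (inner ℂ φ ξ : ℂ)) • φ

/-- The operator `W` with `Wξ = [4⟨φ,ξ⟩⟨φ,Xφ⟩ - 2⟨φ,Xξ⟩] X*φ - 2⟨φ,ξ⟩φ`. -/
def Wmap (X : K ≃ₗᵢ[ℂ] K) (φ : K) : K →ₗ[ℂ] K where
  toFun ξ := (4 * (inner ℂ φ ξ : ℂ) * (inner ℂ φ (X φ) : ℂ) - 2 * (inner ℂ φ (X ξ) : ℂ)) • X.symm φ
      - (2 * (inner ℂ φ ξ : ℂ)) • φ
  map_add' ξ η := by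
    simp only [map_add, inner_add_right]
    module
  map_smul' c ξ := by
    simp only [LinearIsometryEquiv.map_smul, inner_smul_right, RingHom.id_apply]
    module

/-! An endomorphism for which every vector is an eigenvector is scalar, so some unit vector `φ`
is not an eigenvector of `X*`. The range of `W` lies in the plane spanned by `φ` and `X*φ`, and
`W` maps this plane onto itself: on the basis `φ, X*φ` its matrix has determinant
`4 (1 - |⟨φ, X*φ⟩|²)`, which is nonzero by the strict Cauchy–Schwarz inequality. -/

theorem LinearIndependent.norm_inner_lt_norm_mul_norm {𝕜 F : Type*} [RCLike 𝕜]
    [NormedAddCommGroup F] [InnerProductSpace 𝕜 F] {x y : F}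
    (h : LinearIndependent 𝕜 ![x, y]) : ‖(inner 𝕜 x y : 𝕜)‖ < ‖x‖ * ‖y‖ := by
  have hx : x ≠ 0 := by simpa using h.ne_zero 0
  refine (norm_inner_le_norm x y).lt_of_ne fun heq => ?_
  obtain hx0 | ⟨r, rfl⟩ := ((norm_inner_eq_norm_tfae 𝕜 x y).out 0 2).mp heq
  · exact hx hx0
  · exact (LinearIndependent.pair_iff' hx).mp h r rfl

section

variable {E : Type*} [NormedAddCommGroup E] [InnerProductSpace ℂ E]

theorem LinearIsometryEquiv.exists_linearIndependent_apply (U : E ≃ₗᵢ[ℂ] E)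
    (hU : ∀ c : Circle, ∃ ξ : E, U ξ ≠ (c : ℂ) • ξ) : ∃ ψ : E, LinearIndependent ℂ ![ψ, U ψ] := by
  by_contra! hcol
  obtain ⟨a, ha⟩ := LinearMap.exists_eq_smul_id_of_forall_notLinearIndependent
    (f := U.toLinearMap) hcol
  have hUa : ∀ ξ, U ξ = a • ξ := fun ξ => LinearMap.congr_fun ha ξ
  obtain ⟨ξ₀, hξ₀⟩ := hU 1
  have hξ₀0 : ξ₀ ≠ 0 := by rintro rfl; simp at hξ₀
  have ha1 : ‖a‖ = 1 := by
    have := U.norm_map ξ₀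
    rwa [hUa, norm_smul, mul_eq_right₀ (norm_ne_zero_iff.mpr hξ₀0)] at this
  obtain ⟨ξ, hξ⟩ := hU ⟨a, mem_sphere_zero_iff_norm.mpr ha1⟩
  exact hξ (hUa ξ)

theorem exists_norm_eq_one_linearIndependent_symm (X : E ≃ₗᵢ[ℂ] E)
    (hX : ∀ c : Circle, ∃ ξ : E, X ξ ≠ (c : ℂ) • ξ) :
    ∃ φ : E, ‖φ‖ = 1 ∧ LinearIndependent ℂ ![φ, X.symm φ] := by
  obtain ⟨ψ, hψ⟩ := X.exists_linearIndependent_apply hX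
  have hXψ : X ψ ≠ 0 := by simpa using hψ.ne_zero 1
  have hn : ((‖X ψ‖⁻¹ : ℝ) : ℂ) ≠ 0 := by simpa using hXψ
  refine ⟨((‖X ψ‖⁻¹ : ℝ) : ℂ) • X ψ, ?_, ?_⟩
  · rw [norm_smul, Complex.norm_real, norm_inv, norm_norm,
      inv_mul_cancel₀ (norm_ne_zero_iff.mpr hXψ)]
  · rw [LinearIsometryEquiv.map_smul, X.symm_apply_apply, LinearIndependent.pair_smul_iff hn,
      LinearIndependent.pair_symm_iff]
    exact hψ

section Wmap

variable (X : E ≃ₗᵢ[ℂ] E) (φ : E)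

theorem Wmap_apply (ξ : E) :
    Wmap X φ ξ = (4 * inner ℂ φ ξ * inner ℂ φ (X φ) - 2 * inner ℂ φ (X ξ)) • X.symm φ
      - (2 * inner ℂ φ ξ) • φ :=
  rfl

theorem add_Wmap_eq (ξ : E) : ξ + Wmap X φ ξ = X.symm (reflVec φ (X (reflVec φ ξ))) := by
  simp only [Wmap_apply, reflVec, map_sub, _root_.map_smul, inner_sub_right, inner_smul_right,
    LinearIsometryEquiv.symm_apply_apply]
  module

theorem range_Wmap_le_span : LinearMap.range (Wmap X φ) ≤ Submodule.span ℂ {φ, X.symm φ} := by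
  rintro _ ⟨ξ, rfl⟩
  rw [Wmap_apply]
  exact sub_mem (Submodule.smul_mem _ _ (Submodule.subset_span (by simp)))
    (Submodule.smul_mem _ _ (Submodule.subset_span (by simp)))

variable {φ}

theorem Wmap_self (hφ : ‖φ‖ = 1) :
    Wmap X φ φ = (2 * inner ℂ φ (X φ)) • X.symm φ - (2 : ℂ) • φ := by
  rw [Wmap_apply, inner_self_eq_norm_sq_to_K, hφ]
  module

theorem Wmap_symm_self (hφ : ‖φ‖ = 1) :
    Wmap X φ (X.symm φ) = (4 * inner ℂ φ (X.symm φ) * inner ℂ φ (X φ) - 2) • X.symm φ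
      - (2 * inner ℂ φ (X.symm φ)) • φ := by
  rw [Wmap_apply, X.apply_symm_apply, inner_self_eq_norm_sq_to_K, hφ]
  module

theorem inner_symm_mul_inner_ne_one (hφ : ‖φ‖ = 1)
    (hind : LinearIndependent ℂ ![φ, X.symm φ]) :
    inner ℂ φ (X.symm φ) * inner ℂ φ (X φ) ≠ (1 : ℂ) := by
  -- The product is `‖⟪φ, X*φ⟫‖²`, and `‖⟪φ, X*φ⟫‖ < ‖φ‖ ‖X*φ‖ = 1`.
  have hlt := hind.norm_inner_lt_norm_mul_norm
  rw [hφ, X.symm.norm_map, hφ, one_mul] at hlt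
  have hb : inner ℂ φ (X φ) = inner ℂ (X.symm φ) φ := by
    rw [← X.inner_map_map (X.symm φ) φ, X.apply_symm_apply]
  rw [hb, ← inner_conj_symm (X.symm φ) φ, Complex.mul_conj']
  intro h
  have hre := congrArg Complex.re h
  simp only [Complex.one_re, ← Complex.ofReal_pow, Complex.ofReal_re] at hre
  nlinarith [norm_nonneg (inner ℂ φ (X.symm φ))]

theorem range_Wmap_eq_span (hφ : ‖φ‖ = 1) (hind : LinearIndependent ℂ ![φ, X.symm φ]) :
    LinearMap.range (Wmap X φ) = Submodule.span ℂ {φ, X.symm φ} := by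
  set u := X.symm φ
  set a : ℂ := inner ℂ φ u
  set b : ℂ := inner ℂ φ (X φ)
  have hab : 2 * (1 - a * b) ≠ 0 :=
    mul_ne_zero two_ne_zero (sub_ne_zero.mpr (inner_symm_mul_inner_ne_one X hφ hind).symm)
  have hu : u ∈ LinearMap.range (Wmap X φ) := by
    have hcomb : u = (2 * (1 - a * b))⁻¹ • (a • Wmap X φ φ - Wmap X φ u) := by
      rw [Wmap_self X hφ, Wmap_symm_self X hφ, eq_inv_smul_iff₀ hab]
      module
    rw [hcomb]
    exact Submodule.smul_mem _ _ (sub_mem (Submodule.smul_mem _ _ ⟨φ, rfl⟩) ⟨u, rfl⟩)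
  have hφ' : φ ∈ LinearMap.range (Wmap X φ) := by
    have hcomb : b • u - (2 : ℂ)⁻¹ • Wmap X φ φ = φ := by
      rw [Wmap_self X hφ]
      module
    have hmem := sub_mem (Submodule.smul_mem _ b hu) (Submodule.smul_mem _ (2 : ℂ)⁻¹ ⟨φ, rfl⟩)
    rwa [hcomb] at hmem
  refine le_antisymm (range_Wmap_le_span X φ) ?_
  rw [Submodule.span_le, Set.insert_subset_iff, Set.singleton_subset_iff]
  exact ⟨hφ', hu⟩

end Wmap

end

theorem exists_unit_vector_rank_two_general {H : Type*} [NormedAddCommGroup H]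
    [InnerProductSpace ℂ H]
    (X : H ≃ₗᵢ[ℂ] H) (hX : ∀ c : Circle, ∃ ξ : H, X ξ ≠ (c : ℂ) • ξ) :
    ∃ φ : H, ‖φ‖ = 1 ∧ LinearIndependent ℂ ![φ, X.symm φ] ∧
      (∀ ξ : H, ξ + Wmap X φ ξ = X.symm (reflVec φ (X (reflVec φ ξ)))) ∧
      Module.finrank ℂ (LinearMap.range (Wmap X φ)) = 2 := by
  obtain ⟨φ, hφ, hind⟩ := exists_norm_eq_one_linearIndependent_symm X hX
  refine ⟨φ, hφ, hind, add_Wmap_eq X φ, ?_⟩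
  rw [range_Wmap_eq_span X hφ hind, ← Matrix.range_cons_cons_empty φ (X.symm φ) ![],
    finrank_span_eq_card hind, Fintype.card_fin]

/-- If the unitary `X` is not a unimodular multiple of the identity, then there is a unit
vector `φ` such that `φ` and `X*φ` are linearly independent and, with `R = 𝟙 - 2P_φ` and
`Z = X*R*XR`, the operator `W = Z - 𝟙` (which acts by
`Wξ = [4⟨φ,ξ⟩⟨φ,Xφ⟩ - 2⟨φ,Xξ⟩] X*φ - 2⟨φ,ξ⟩φ`) has rank exactly `2`. -/
theorem exists_unit_vector_rank_two {H : Type*} [NormedAddCommGroup H]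
    [InnerProductSpace ℂ H] [CompleteSpace H]
    (X : H ≃ₗᵢ[ℂ] H) (hX : ∀ c : Circle, ∃ ξ : H, X ξ ≠ (c : ℂ) • ξ) :
    ∃ φ : H, ‖φ‖ = 1 ∧ LinearIndependent ℂ ![φ, X.symm φ] ∧
      (∀ ξ : H, ξ + Wmap X φ ξ = X.symm (reflVec φ (X (reflVec φ ξ)))) ∧
      Module.finrank ℂ (LinearMap.range (Wmap X φ)) = 2 :=
  exists_unit_vector_rank_two_general X hX

end
end
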